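/- arXiv:2012.01528 — 3 statements merged into one kernel-verified Lean document; each statement's English description precedes it below -/
import Mathlib

section
/- Let 0 < p < q and 0 < ε with ε^p < 1/2. Then (1 - ε^p)^(q/p) + ε^q < 1. -/
theorem stmt_2 (p q ε : ℝ) (hp : 0 < p) (hpq : p < q) (hε : 0 < ε)
    (hεp : ε ^ p < 1 / 2) :
    (1 - ε ^ p) ^ (q / p) + ε ^ q < 1 := by
  set x := ε ^ p with hx
  have hx0 : 0 < x := Real.rpow_pos_of_pos hε p
  have hx1 : x < 1 := lt_trans hεp (by norm_num)
  have hr : 1 < q / p := (one_lt_div hp).mpr hpq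
  have h1 : (1 - x) ^ (q / p) < 1 - x := by
    calc (1 - x) ^ (q / p) < (1 - x) ^ (1 : ℝ) :=
          Real.rpow_lt_rpow_of_exponent_gt (by linarith) (by linarith) hr
      _ = 1 - x := Real.rpow_one _
  have h2 : ε ^ q = x ^ (q / p) := by
    rw [hx, ← Real.rpow_mul hε.le]
    congr 1
    field_simp
  have h3 : x ^ (q / p) < x := by
    calc x ^ (q / p) < x ^ (1 : ℝ) :=
          Real.rpow_lt_rpow_of_exponent_gt hx0 hx1 hr
      _ = x := Real.rpow_one _
  rw [h2]; linarith
end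

section
/- Let p ≥ 1 and let f ∈ L^p(ℝ) be nonzero with ‖f‖_p = 1. For an interval I of positive finite length and integers k ≥ 0 define f_I^k := f · χ_I · χ_{|f| ≤ 2^k |I|^{-1/p}}. Suppose (I_k) is a sequence of intervals chosen so that for each K, setting f^{>0} := f and inductively f^k := f^{>k-1} χ_{|f| < 2^k |I_k|^{-1/p}} χ_{I_k}, f^{>k} := f^{>k-1} - f^k, the interval I_k maximizes ‖f^k‖_p over all dyadic intervals. Then for every K ≥ 1, the quantity A_K := sup over dyadic intervals I of ‖(f^{>2K})_I^K‖_p satisfies K · A_K^p ≤ 1. -/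
/-!
The pieces `f^k` are cut out of successive remainders, so at every point at most one of them is
nonzero and the remainder vanishes wherever a piece does; hence `∑_k ‖f^k‖_p^p ≤ ‖f‖_p^p = 1`.
For `K < k ≤ 2K` and any dyadic `I`, the truncation `(f^{>2K})_I^K` is pointwise dominated by the
candidate piece `f^{>k-1} χ_I χ_{|f| < 2^k |I|^{-1/p}}`, since `f^{>2K}` is `f^{>k-1}` or `0` and
`2^K < 2^k`. Maximality of `I_k` then gives `A_K ≤ ‖f^k‖_p` for these `K` values of `k`.
-/

open MeasureTheory ENNReal Classical

-- The dyadic interval of length `2^k` starting at `m * 2^k` (indexed by `(k, m) : ℤ × ℤ`).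
def dyadicI (k m : ℤ) : Set ℝ :=
  Set.Ico ((m : ℝ) * 2 ^ (k : ℝ)) (((m : ℝ) + 1) * 2 ^ (k : ℝ))

-- `pieceLT p f prev j (k, m)` is `prev · χ_I · χ_{|f| < 2^j |I|^{-1/p}}` where `I = dyadicI k m`
-- (so `|I|^{-1/p} = 2^{-k/p}`); this is the piece removed at step `j` of the recursion.
noncomputable def pieceLT (p : ℝ) (f prev : ℝ → ℂ) (j : ℕ) (km : ℤ × ℤ) : ℝ → ℂ := fun t =>
  if t ∈ dyadicI km.1 km.2 ∧ ‖f t‖ < (2 : ℝ) ^ (j : ℝ) * (2 : ℝ) ^ (-(km.1 : ℝ) / p)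
  then prev t else 0

-- `fgt p f I j` is the remainder `f^{> j}`: `f^{>0} = f` and
-- `f^{>j} = f^{>j-1} - f^{>j-1} χ_{I_j} χ_{|f| < 2^j |I_j|^{-1/p}}`.
noncomputable def fgt (p : ℝ) (f : ℝ → ℂ) (I : ℕ → ℤ × ℤ) : ℕ → ℝ → ℂ
  | 0 => f
  | j + 1 => fun t => fgt p f I j t - pieceLT p f (fgt p f I j) (j + 1) (I (j + 1)) t

-- `truncLE p f g K (k, m)` is `g_I^K = g · χ_I · χ_{|f| ≤ 2^K |I|^{-1/p}}` with `I = dyadicI k m`.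
noncomputable def truncLE (p : ℝ) (f g : ℝ → ℂ) (K : ℕ) (km : ℤ × ℤ) : ℝ → ℂ := fun t =>
  if t ∈ dyadicI km.1 km.2 ∧ ‖f t‖ ≤ (2 : ℝ) ^ (K : ℝ) * (2 : ℝ) ^ (-(km.1 : ℝ) / p)
  then g t else 0

-- The piece `f^{i+1}` of the paper (note the index shift).
noncomputable def fpiece (p : ℝ) (f : ℝ → ℂ) (I : ℕ → ℤ × ℤ) (i : ℕ) : ℝ → ℂ :=
  pieceLT p f (fgt p f I i) (i + 1) (I (i + 1))

theorem Finset.sum_lintegral_le_lintegral_sum {α ι : Type*} [MeasurableSpace α] {μ : Measure α}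
    (s : Finset ι) (g : ι → α → ℝ≥0∞) :
    ∑ i ∈ s, ∫⁻ x, g i x ∂μ ≤ ∫⁻ x, ∑ i ∈ s, g i x ∂μ := by
  induction s using Finset.cons_induction with
  | empty => simp
  | cons a s ha ih =>
    simp only [Finset.sum_cons]
    exact (add_le_add_right ih _).trans (le_lintegral_add _ _)

theorem eLpNorm_ofReal_rpow_eq_lintegral {α E : Type*} [MeasurableSpace α] {μ : Measure α}
    [NormedAddCommGroup E] {p : ℝ} (hp : 0 < p) (g : α → E) :
    eLpNorm g (ENNReal.ofReal p) μ ^ p = ∫⁻ x, ‖g x‖ₑ ^ p ∂μ := by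
  have h := eLpNorm_nnreal_pow_eq_lintegral (μ := μ) (f := g) (p := p.toNNReal)
    (Real.toNNReal_pos.2 hp).ne'
  rwa [Real.coe_toNNReal _ hp.le] at h

section Recursion

variable (p : ℝ) (f : ℝ → ℂ) (I : ℕ → ℤ × ℤ)

theorem fgt_succ_eq_self_or_eq_zero (n : ℕ) (t : ℝ) :
    fgt p f I (n + 1) t = fgt p f I n t ∨ fgt p f I (n + 1) t = 0 := by
  simp only [fgt, pieceLT]
  split <;> simp

theorem norm_fgt_le_of_le {n m : ℕ} (h : n ≤ m) (t : ℝ) :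
    ‖fgt p f I m t‖ ≤ ‖fgt p f I n t‖ := by
  induction m, h using Nat.le_induction with
  | base => exact le_rfl
  | succ m _ ih =>
    rcases fgt_succ_eq_self_or_eq_zero p f I m t with h | h <;> rw [h]
    · exact ih
    · simp

theorem sum_enorm_fpiece_rpow_add_enorm_fgt_rpow (hp : 0 < p) (n : ℕ) (t : ℝ) :
    ∑ i ∈ Finset.range n, ‖fpiece p f I i t‖ₑ ^ p + ‖fgt p f I n t‖ₑ ^ p = ‖f t‖ₑ ^ p := by
  induction n with
  | zero => simp [fgt]
  | succ n ih =>
    rw [Finset.sum_range_succ, ← ih, add_assoc]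
    congr 1
    simp only [fpiece, fgt, pieceLT]
    split <;> simp [ENNReal.zero_rpow_of_pos hp]

theorem sum_eLpNorm_fpiece_rpow_le (hp : 0 < p) (n : ℕ) :
    ∑ i ∈ Finset.range n, eLpNorm (fpiece p f I i) (ENNReal.ofReal p) volume ^ p ≤
      eLpNorm f (ENNReal.ofReal p) volume ^ p := by
  simp only [eLpNorm_ofReal_rpow_eq_lintegral hp]
  refine (Finset.sum_lintegral_le_lintegral_sum _ _).trans (lintegral_mono fun t => ?_)
  rw [← sum_enorm_fpiece_rpow_add_enorm_fgt_rpow p f I hp n t]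
  exact le_self_add

theorem eLpNorm_truncLE_fgt_le_eLpNorm_pieceLT {K i m : ℕ} (hKi : K ≤ i) (him : i ≤ m)
    (km : ℤ × ℤ) :
    eLpNorm (truncLE p f (fgt p f I m) K km) (ENNReal.ofReal p) volume ≤
      eLpNorm (pieceLT p f (fgt p f I i) (i + 1) km) (ENNReal.ofReal p) volume := by
  refine eLpNorm_mono fun t => ?_
  simp only [truncLE, pieceLT]
  split_ifs with htrunc hpiece
  · exact norm_fgt_le_of_le p f I him t
  · refine absurd ⟨htrunc.1, htrunc.2.trans_lt ?_⟩ hpiece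
    gcongr
    exact Real.rpow_lt_rpow_of_exponent_lt one_lt_two (by exact_mod_cast Nat.lt_succ_of_le hKi)
  · simp
  · simp

end Recursion

theorem stmt_3_general (p : ℝ) (hp : 1 ≤ p) (f : ℝ → ℂ)
    (hf1 : eLpNorm f (ENNReal.ofReal p) volume = 1)
    (I : ℕ → ℤ × ℤ)
    -- at each step `j ≥ 1`, the dyadic interval `I j` maximizes the `L^p` norm of the
    -- removed piece over all dyadic intervals
    (hmax : ∀ j : ℕ, 1 ≤ j → ∀ km : ℤ × ℤ,
      eLpNorm (pieceLT p f (fgt p f I (j - 1)) j km) (ENNReal.ofReal p) volume ≤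
        eLpNorm (pieceLT p f (fgt p f I (j - 1)) j (I j)) (ENNReal.ofReal p) volume) :
    ∀ K : ℕ, 1 ≤ K →
      (K : ℝ≥0∞) *
        (⨆ km : ℤ × ℤ,
          eLpNorm (truncLE p f (fgt p f I (2 * K)) K km) (ENNReal.ofReal p) volume) ^ p ≤ 1 := by
  intro K _
  have hp0 : 0 < p := one_pos.trans_le hp
  set A := ⨆ km : ℤ × ℤ, eLpNorm (truncLE p f (fgt p f I (2 * K)) K km) (ENNReal.ofReal p) volume
  have hA : ∀ i ∈ Finset.Ico K (2 * K), A ≤ eLpNorm (fpiece p f I i) (ENNReal.ofReal p) volume := by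
    intro i hi
    obtain ⟨hKi, hi2K⟩ := Finset.mem_Ico.1 hi
    refine iSup_le fun km => (eLpNorm_truncLE_fgt_le_eLpNorm_pieceLT p f I hKi hi2K.le km).trans ?_
    simpa [fpiece] using hmax (i + 1) (by omega) km
  calc (K : ℝ≥0∞) * A ^ p = ∑ _i ∈ Finset.Ico K (2 * K), A ^ p := by simp [two_mul]
    _ ≤ ∑ i ∈ Finset.Ico K (2 * K), eLpNorm (fpiece p f I i) (ENNReal.ofReal p) volume ^ p :=
      Finset.sum_le_sum fun i hi => ENNReal.rpow_le_rpow (hA i hi) hp0.le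
    _ ≤ ∑ i ∈ Finset.range (2 * K), eLpNorm (fpiece p f I i) (ENNReal.ofReal p) volume ^ p :=
      Finset.sum_le_sum_of_subset fun i hi => Finset.mem_range.2 (Finset.mem_Ico.1 hi).2
    _ ≤ 1 := by simpa [hf1] using sum_eLpNorm_fpiece_rpow_le p f I hp0 (2 * K)

theorem stmt_3 (p : ℝ) (hp : 1 ≤ p) (f : ℝ → ℂ)
    (hf : MemLp f (ENNReal.ofReal p) volume)
    (hf0 : ¬ f =ᵐ[volume] 0)
    (hf1 : eLpNorm f (ENNReal.ofReal p) volume = 1)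
    (I : ℕ → ℤ × ℤ)
    -- at each step `j ≥ 1`, the dyadic interval `I j` maximizes the `L^p` norm of the
    -- removed piece over all dyadic intervals
    (hmax : ∀ j : ℕ, 1 ≤ j → ∀ km : ℤ × ℤ,
      eLpNorm (pieceLT p f (fgt p f I (j - 1)) j km) (ENNReal.ofReal p) volume ≤
        eLpNorm (pieceLT p f (fgt p f I (j - 1)) j (I j)) (ENNReal.ofReal p) volume) :
    ∀ K : ℕ, 1 ≤ K →
      (K : ℝ≥0∞) *
        (⨆ km : ℤ × ℤ,
          eLpNorm (truncLE p f (fgt p f I (2 * K)) K km) (ENNReal.ofReal p) volume) ^ p ≤ 1 :=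
  stmt_3_general p hp f hf1 I hmax
end

section
/- Let d ≥ 2 and Γ(t) := Σ_{j=1}^d γ(t_j) with γ the moment curve, and let Δ := {(t,...,t) : t ∈ ℝ} ⊂ ℝ^d. Then Γ^{-1}({d·γ(t) : t ∈ ℝ}) = Δ; i.e., Γ(t₁,...,t_d) lies on the dilated curve d·γ if and only if t₁ = t₂ = ... = t_d. -/
theorem stmt_11 (d : ℕ) (hd : 2 ≤ d) :
    (fun t : Fin d → ℝ => fun i : Fin d => ∑ j : Fin d, (t j) ^ ((i : ℕ) + 1)) ⁻¹'
        {x : Fin d → ℝ | ∃ s : ℝ, x = fun i : Fin d => (d : ℝ) * s ^ ((i : ℕ) + 1)}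
      = {t : Fin d → ℝ | ∃ c : ℝ, ∀ j : Fin d, t j = c} := by
  ext t
  simp only [Set.mem_preimage, Set.mem_setOf_eq]
  constructor
  · rintro ⟨s, hs⟩
    refine ⟨s, fun j => ?_⟩
    have h1 := congrFun hs ⟨0, by omega⟩
    have h2 := congrFun hs ⟨1, by omega⟩
    norm_num at h1 h2
    have key : ∑ j : Fin d, (t j - s) ^ 2 = 0 := by
      have expand : ∀ j : Fin d, (t j - s) ^ 2 = (t j ^ 2 - 2 * s * t j) + s ^ 2 := by
        intro j; ring
      rw [Finset.sum_congr rfl (fun j _ => expand j), Finset.sum_add_distrib,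
        Finset.sum_sub_distrib, ← Finset.mul_sum, h1, h2]
      simp [Finset.card_univ]
      ring
    have nonneg : ∀ j ∈ Finset.univ, (0:ℝ) ≤ (t j - s) ^ 2 := fun j _ => sq_nonneg _
    have := (Finset.sum_eq_zero_iff_of_nonneg nonneg).mp key j (Finset.mem_univ j)
    have := pow_eq_zero_iff (n := 2) (by norm_num) |>.mp this
    linarith
  · rintro ⟨c, hc⟩
    refine ⟨c, ?_⟩
    funext i
    simp [hc, Finset.card_univ]
end
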